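/- If H is a computable functional unit for ℕ and x is an instruction sequence over I(H) such that ⌈x⌉_H is total, then ⌈x⌉_H is a computable method operation on ℕ; that is, every derived method operation of a computable functional unit for ℕ is computable. -/

import Mathlib

/-- Primitive instructions: plain basic `f.m`, positive test `+f.m`, negative test `-f.m`
(method names are natural numbers, there is a single focus `f`), forward jump `#l`,
backward jump `\l`, and the positive/negative termination instructions `!t` / `!f`. -/
inductive Instr : Type where
  | basic (m : ℕ)
  | postest (m : ℕ)
  | negtest (m : ℕ)
  | fjump (l : ℕ)
  | bjump (l : ℕ)
  | haltT
  | haltF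
deriving DecidableEq

/-- A functional unit for a state space `S`: a finite, functional set of
(method name, method operation) pairs, where a method operation is a total
function `S → Bool × S`. -/
structure FU (S : Type*) where
  carrier : Set (ℕ × (S → Bool × S))
  finite : carrier.Finite
  functional : ∀ {m : ℕ} {M M' : S → Bool × S},
    (m, M) ∈ carrier → (m, M') ∈ carrier → M = M'

/-- The interface of a functional unit: the set of method names occurring in it. -/
def FU.iface {S : Type*} (H : FU S) : Set ℕ := {m | ∃ M, (m, M) ∈ H.carrier}

/-- The method operation named `m` in `H` (an arbitrary fixed value if `m ∉ I(H)`). -/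
noncomputable def FU.op {S : Type*} (H : FU S) (m : ℕ) (s : S) : Bool × S :=
  letI := Classical.propDecidable
  if h : ∃ M, (m, M) ∈ H.carrier then h.choose s else (true, s)

/-- The restriction `⟨I, H⟩` of a functional unit to a set `I` of method names. -/
def FU.restrict {S : Type*} (H : FU S) (I : Set ℕ) : FU S where
  carrier := {p ∈ H.carrier | p.1 ∈ I}
  finite := H.finite.subset (Set.sep_subset _ _)
  functional := fun hM hM' => H.functional hM.1 hM'.1

/-- The method names used by an instruction all belong to `I`. -/
def Instr.namesIn (I : Set ℕ) : Instr → Prop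
  | .basic m => m ∈ I
  | .postest m => m ∈ I
  | .negtest m => m ∈ I
  | _ => True

/-- An instruction sequence over a set `I` of method names: a finite nonempty list of
primitive instructions whose method names belong to `I`. -/
def InstrSeqOver (I : Set ℕ) (x : List Instr) : Prop :=
  x ≠ [] ∧ ∀ u ∈ x, u.namesIn I

/-- `Exec H x i s b s'` : execution of the instruction sequence `x` on the functional
unit `H`, from (0-based) position `i` in state `s`, terminates delivering the Boolean
value `b` with final state `s'`.  (Position `i` here corresponds to the 1-based
position `i+1`; positions outside the sequence, jumps `#0`/`\0`, and infinite
executions admit no derivation, i.e. execution does not terminate.) -/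
inductive Exec {S : Type*} (H : FU S) (x : List Instr) : ℕ → S → Bool → S → Prop where
  | basic {i : ℕ} {s : S} {b : Bool} {s' : S} (m : ℕ)
      (hu : x[i]? = some (Instr.basic m))
      (h : Exec H x (i + 1) (H.op m s).2 b s') : Exec H x i s b s'
  | posT {i : ℕ} {s : S} {b : Bool} {s' : S} (m : ℕ)
      (hu : x[i]? = some (Instr.postest m)) (hr : (H.op m s).1 = true)
      (h : Exec H x (i + 1) (H.op m s).2 b s') : Exec H x i s b s'
  | posF {i : ℕ} {s : S} {b : Bool} {s' : S} (m : ℕ)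
      (hu : x[i]? = some (Instr.postest m)) (hr : (H.op m s).1 = false)
      (h : Exec H x (i + 2) (H.op m s).2 b s') : Exec H x i s b s'
  | negT {i : ℕ} {s : S} {b : Bool} {s' : S} (m : ℕ)
      (hu : x[i]? = some (Instr.negtest m)) (hr : (H.op m s).1 = true)
      (h : Exec H x (i + 2) (H.op m s).2 b s') : Exec H x i s b s'
  | negF {i : ℕ} {s : S} {b : Bool} {s' : S} (m : ℕ)
      (hu : x[i]? = some (Instr.negtest m)) (hr : (H.op m s).1 = false)
      (h : Exec H x (i + 1) (H.op m s).2 b s') : Exec H x i s b s'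
  | fjump {i : ℕ} {s : S} {b : Bool} {s' : S} (l : ℕ)
      (hu : x[i]? = some (Instr.fjump l))
      (h : Exec H x (i + l) s b s') : Exec H x i s b s'
  | bjump {i : ℕ} {s : S} {b : Bool} {s' : S} (l : ℕ)
      (hu : x[i]? = some (Instr.bjump l)) (hl : l ≤ i)
      (h : Exec H x (i - l) s b s') : Exec H x i s b s'
  | haltT {i : ℕ} {s : S} (hu : x[i]? = some Instr.haltT) : Exec H x i s true s
  | haltF {i : ℕ} {s : S} (hu : x[i]? = some Instr.haltF) : Exec H x i s false s

/-- `M` is a derived method operation of `H`: there is an instruction sequence `x`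
over `I(H)` whose produced partial method operation `⌈x⌉_H` is total and equals `M`. -/
def DerivedOp {S : Type*} (H : FU S) (M : S → Bool × S) : Prop :=
  ∃ x : List Instr, InstrSeqOver H.iface x ∧ ∀ s, Exec H x 0 s (M s).1 (M s).2

/-- `H ≤ H'` : every method operation of `H` is a derived method operation of `H'`. -/
def FU.le {S : Type*} (H H' : FU S) : Prop :=
  ∀ m M, (m, M) ∈ H.carrier → DerivedOp H' M

/-- `H ≡ H'` : `H ≤ H'` and `H' ≤ H`. -/
def FU.equiv {S : Type*} (H H' : FU S) : Prop := FU.le H H' ∧ FU.le H' H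

/-- A method operation on ℕ is computable if both its components are. -/
def ComputableMO (M : ℕ → Bool × ℕ) : Prop :=
  Computable (fun n => (M n).1) ∧ Computable (fun n => (M n).2)

/-- A functional unit for ℕ is computable if all its method operations are. -/
def ComputableFU (H : FU ℕ) : Prop :=
  ∀ m M, (m, M) ∈ H.carrier → ComputableMO M

/-! Execution is simulated by iterating a one-step transition function on configurations
`(position, state) ⊕ (delivered value, final state)`. When each method operation of `H` is
computable, so is the transition function, since the finitely many positions of `x` can be
split off one at a time. A total `⌈x⌉_H` is then found by unbounded search for the first
number of steps after which the iteration has terminated. -/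

section Transition

variable {S : Type*}

/-- Positions from which execution cannot terminate (a backward jump past the start, or a
position outside the sequence) become self-loops. -/
noncomputable def Instr.exec (u : Instr) (H : FU S) (i : ℕ) (s : S) :
    (ℕ × S) ⊕ (Bool × S) :=
  match u with
  | .basic m => .inl (i + 1, (H.op m s).2)
  | .postest m => .inl (bif (H.op m s).1 then i + 1 else i + 2, (H.op m s).2)
  | .negtest m => .inl (bif (H.op m s).1 then i + 2 else i + 1, (H.op m s).2)
  | .fjump l => .inl (i + l, s)
  | .bjump l => .inl (if l ≤ i then i - l else i, s)
  | .haltT => .inr (true, s)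
  | .haltF => .inr (false, s)

noncomputable def stepAt (H : FU S) (x : List Instr) (p : ℕ × S) : (ℕ × S) ⊕ (Bool × S) :=
  match x[p.1]? with
  | some u => u.exec H p.1 p.2
  | none => .inl p

noncomputable def step (H : FU S) (x : List Instr) :
    (ℕ × S) ⊕ (Bool × S) → (ℕ × S) ⊕ (Bool × S) :=
  Sum.elim (stepAt H x) Sum.inr

theorem exists_iterate_eq_of_apply_eq {α : Type*} {f : α → α} {a a' c : α} (h : f a = a')
    (h' : ∃ n, f^[n] a' = c) : ∃ n, f^[n] a = c :=
  let ⟨n, hn⟩ := h'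
  ⟨n + 1, by rw [Function.iterate_succ_apply, h, hn]⟩

theorem Exec.exists_step_iterate {H : FU S} {x : List Instr} {i : ℕ} {s : S} {b : Bool}
    {s' : S} (h : Exec H x i s b s') :
    ∃ n, (step H x)^[n] (.inl (i, s)) = .inr (b, s') := by
  induction h with
  | basic _ hu _ ih | fjump _ hu _ ih =>
    exact exists_iterate_eq_of_apply_eq (by simp [step, stepAt, Instr.exec, hu]) ih
  | posT _ hu hc _ ih | posF _ hu hc _ ih | negT _ hu hc _ ih | negF _ hu hc _ ih
  | bjump _ hu hc _ ih =>
    exact exists_iterate_eq_of_apply_eq (by simp [step, stepAt, Instr.exec, hu, hc]) ih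
  | haltT hu | haltF hu => exact ⟨1, by simp [step, stepAt, Instr.exec, hu]⟩

end Transition

section Computability

variable {α β γ σ : Type*} [Primcodable α] [Primcodable β] [Primcodable γ] [Primcodable σ]

theorem Computable.nat_iterate {f : α → ℕ} {g : α → β} {h : α → β → β}
    (hf : Computable f) (hg : Computable g) (hh : Computable₂ h) :
    Computable fun a => (h a)^[f a] (g a) :=
  (Computable.nat_rec hf hg
    (hh.comp Computable.fst (Computable.snd.comp Computable.snd)).to₂).of_eq
    fun a => by induction f a <;> simp [*, -Function.iterate_succ, Function.iterate_succ']

theorem Computable.of_slices {n : ℕ} {F G : ℕ × α → σ}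
    (hF : ∀ i < n, Computable fun a => F (i, a))
    (hFG : ∀ i, n ≤ i → ∀ a, F (i, a) = G (i, a)) (hG : Computable G) : Computable F := by
  induction n generalizing G with
  | zero => exact hG.of_eq fun p => (hFG p.1 (Nat.zero_le _) p.2).symm
  | succ n ih =>
    -- `G` is corrected to agree with `F` on the slice `n`, by a case split on `p.1 = n`.
    refine ih (G := fun p => bif p.1 == n then F (n, p.2) else G p)
      (fun i hi => hF i (Nat.lt_succ_of_lt hi)) (fun i hi a => ?_) ?_
    · rcases hi.eq_or_lt with rfl | hlt
      · simp
      · simp [beq_eq_false_iff_ne.2 hlt.ne', hFG i hlt a]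
    · exact Computable.cond (Primrec.beq.comp Primrec.fst (Primrec.const n)).to_comp
        ((hF n (Nat.lt_succ_self n)).comp Computable.snd) hG

theorem Computable.of_iterate_eq_inr {f : α ⊕ β → α ⊕ β} (hf : Computable f)
    (hfix : ∀ b, f (.inr b) = .inr b) {init : γ → α} (hinit : Computable init) {F : γ → β}
    (hF : ∀ c, ∃ n, f^[n] (.inl (init c)) = .inr (F c)) : Computable F := by
  set run : γ → ℕ → Option β :=
    fun c n => Sum.elim (fun _ => none) some (f^[n] (.inl (init c)))
  have hrun : Computable₂ run :=
    (Computable.sumCasesOn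
      (Computable.nat_iterate Computable.snd (Computable.sumInl.comp (hinit.comp Computable.fst))
        (hf.comp Computable.snd).to₂)
      (Computable.const none).to₂ (Computable.option_some.comp Computable.snd).to₂).to₂.of_eq
      fun p => by cases f^[p.2] (.inl (init p.1)) <;> rfl
  have mem_run {c n b} : b ∈ run c n ↔ f^[n] (.inl (init c)) = .inr b := by
    simp only [run]
    rcases f^[n] (.inl (init c)) with a | b' <;> simp [eq_comm]
  refine (Partrec.rfindOpt hrun).of_eq_tot fun c => ?_
  -- `f` fixes terminal configurations, so `run c` keeps its value once it has one.
  rw [Nat.rfindOpt_mono fun hmn hm => ?_]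
  · exact (hF c).imp fun n hn => mem_run.2 hn
  · rw [mem_run] at hm ⊢
    obtain ⟨k, rfl⟩ := Nat.exists_eq_add_of_le hmn
    rw [Nat.add_comm, Function.iterate_add_apply, hm, Function.iterate_fixed (hfix _)]

end Computability

theorem FU.op_eq_of_mem {S : Type*} {H : FU S} {m : ℕ} {M : S → Bool × S}
    (hm : (m, M) ∈ H.carrier) : H.op m = M := by
  have hex : ∃ M', (m, M') ∈ H.carrier := ⟨M, hm⟩
  funext s
  rw [FU.op, dif_pos hex]
  exact congrFun (H.functional hex.choose_spec hm) s

theorem FU.computable_op {H : FU ℕ} (hH : ComputableFU H) {m : ℕ} (hm : m ∈ H.iface) :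
    Computable (H.op m) := by
  obtain ⟨M, hM⟩ := hm
  rw [FU.op_eq_of_mem hM]
  exact (hH m M hM).1.pair (hH m M hM).2

theorem Instr.computable_exec {H : FU ℕ} (hH : ComputableFU H) {u : Instr}
    (hu : u.namesIn H.iface) (i : ℕ) : Computable (u.exec H i) := by
  cases u with
  | basic m =>
    have hop := H.computable_op hH hu
    exact Computable.sumInl.comp ((Computable.const _).pair (Computable.snd.comp hop))
  | postest m =>
    have hop := H.computable_op hH hu
    exact Computable.sumInl.comp (((Computable.fst.comp hop).cond (Computable.const _)
      (Computable.const _)).pair (Computable.snd.comp hop))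
  | negtest m =>
    have hop := H.computable_op hH hu
    exact Computable.sumInl.comp (((Computable.fst.comp hop).cond (Computable.const _)
      (Computable.const _)).pair (Computable.snd.comp hop))
  | fjump l | bjump l => exact Computable.sumInl.comp ((Computable.const _).pair Computable.id)
  | haltT | haltF => exact Computable.sumInr.comp ((Computable.const _).pair Computable.id)

theorem computable_stepAt {H : FU ℕ} (hH : ComputableFU H) {x : List Instr}
    (hx : ∀ u ∈ x, u.namesIn H.iface) : Computable (stepAt H x) := by
  refine Computable.of_slices (n := x.length) (G := Sum.inl) (fun i hi => ?_) (fun i hi s => ?_)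
    Computable.sumInl
  · exact (Instr.computable_exec hH (hx _ (List.getElem_mem hi)) i).of_eq fun s => by
      simp [stepAt, List.getElem?_eq_getElem hi]
  · simp [stepAt, List.getElem?_eq_none hi]

theorem computable_step {H : FU ℕ} (hH : ComputableFU H) {x : List Instr}
    (hx : ∀ u ∈ x, u.namesIn H.iface) : Computable (step H x) :=
  (Computable.sumCasesOn Computable.id ((computable_stepAt hH hx).comp Computable.snd).to₂
    (Computable.sumInr.comp Computable.snd).to₂).of_eq fun c => by cases c <;> rfl

/-- Every derived method operation of a computable functional unit for ℕ is
computable: if `x` is an instruction sequence over `I(H)` and `⌈x⌉_H` is total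
(with value `M s` at each `s`), then `M` is a computable method operation. -/
theorem derivedOp_computable (H : FU ℕ) (hH : ComputableFU H)
    (x : List Instr) (hx : InstrSeqOver H.iface x)
    (M : ℕ → Bool × ℕ) (hM : ∀ s, Exec H x 0 s (M s).1 (M s).2) :
    ComputableMO M := by
  have hM_computable : Computable M :=
    Computable.of_iterate_eq_inr (computable_step hH hx.2) (fun _ => rfl)
      ((Computable.const 0).pair Computable.id) fun s => (hM s).exists_step_iterate
  exact ⟨Computable.fst.comp hM_computable, Computable.snd.comp hM_computable⟩
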